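/- Let M = (S, ρ) be a matroid scheme with no loops and let F = F(M) be its poset of flats, with Möbius function μ_F. Then for every flat w ∈ F, μ_F(w) = Σ_{u ∈ S, cl(u) = w} (−1)^{|u|}. -/

import Mathlib

/-!
Both `μ` and `ν w := Σ_{cl u = w} (-1)^{|u|}` satisfy the recursion defining the Möbius function
of the poset of flats, which determines a function uniquely. For `ν`: since `cl` is monotone,
`cl u ≤ w ↔ u ≤ w` for a flat `w`, so summing `ν` over the flats below `w` gives the alternating
sum over the Boolean interval `S_{≤ w}`, which vanishes unless `w = 0̂`; without loops `0̂` is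
itself a flat, so it is the least flat `b`.
-/

/-- The set of minimal upper bounds of `x` and `y` (denoted `x ∨ y` in the paper). -/
def mub {S : Type*} [PartialOrder S] (x y : S) : Set S :=
  {u | x ≤ u ∧ y ≤ u ∧ ∀ v, x ≤ v → y ≤ v → v ≤ u → v = u}

/-- The set of maximal lower bounds of `x` and `y` (denoted `x ∧ y` in the paper). -/
def mlb {S : Type*} [PartialOrder S] (x y : S) : Set S :=
  {l | l ≤ x ∧ l ≤ y ∧ ∀ m, m ≤ x → m ≤ y → l ≤ m → m = l}

/-- The set of minimal upper bounds of a subset `T`. -/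
def mubSet {S : Type*} [PartialOrder S] (T : Set S) : Set S :=
  {u | (∀ t ∈ T, t ≤ u) ∧ ∀ v, (∀ t ∈ T, t ≤ v) → v ≤ u → v = u}

/-- The number of atoms below `x`, i.e. `|x|`, the rank of `x` in a simplicial poset. -/
noncomputable def natRank {S : Type*} [PartialOrder S] [OrderBot S] (x : S) : ℕ :=
  Nat.card {a : S // IsAtom a ∧ a ≤ x}

/-- A finite bounded-below poset is simplicial if every lower interval is isomorphic to
the Boolean lattice of subsets of the set of atoms below. -/
def IsSimplicialPoset (S : Type*) [PartialOrder S] [OrderBot S] [Fintype S] : Prop :=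
  ∀ x : S, Nonempty (Set.Iic x ≃o Set {a : S // IsAtom a ∧ a ≤ x})

/-- A matroid scheme: a rank function `ρ` on a finite simplicial poset `S`
satisfying (M1)–(M5). -/
structure IsMatroidScheme {S : Type*} [PartialOrder S] [OrderBot S] [Fintype S]
    (ρ : S → ℕ) : Prop where
  simplicial : IsSimplicialPoset S
  M1 : ∀ x : S, ρ x ≤ natRank x
  M2 : ∀ ⦃x y : S⦄, x ≤ y → ρ x ≤ ρ y
  M3 : ∀ x y u l : S, u ∈ mub x y → l ∈ mlb x y → ρ u + ρ l ≤ ρ x + ρ y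
  M4 : ∀ x y l : S, l ∈ mlb x y → ρ x = ρ l → (mub x y).Nonempty
  M5 : ∀ x y : S, ρ x < ρ y →
    ∃ a : S, IsAtom a ∧ a ≤ y ∧ ¬ a ≤ x ∧ (mub x a).Nonempty

/-- `cl` is the closure operator of a matroid scheme `(S, ρ)`:
`cl x` is the greatest element above `x` of the same rank. -/
def IsClosureFun {S : Type*} [PartialOrder S] (ρ : S → ℕ) (cl : S → S) : Prop :=
  ∀ x : S, x ≤ cl x ∧ ρ (cl x) = ρ x ∧ ∀ y : S, x ≤ y → ρ y = ρ x → y ≤ cl x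

/-- The bases of a matroid scheme: the maximal independent elements. -/
def Bases {S : Type*} [PartialOrder S] [OrderBot S] (ρ : S → ℕ) : Set S :=
  {x | ρ x = natRank x ∧ ∀ w, ρ w = natRank w → x ≤ w → w = x}

/-- The circuits of a matroid scheme: the minimal dependent elements. -/
def Circuits {S : Type*} [PartialOrder S] [OrderBot S] (ρ : S → ℕ) : Set S :=
  {x | ρ x < natRank x ∧ ∀ y, ρ y < natRank y → y ≤ x → y = x}

/-- `c` is the complement `x ∖ a` of `a` in the Boolean lattice `S_{≤ x}`. -/
def IsComplementIn {S : Type*} [PartialOrder S] [OrderBot S] (c a x : S) : Prop :=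
  c ≤ x ∧ a ≤ x ∧ (∀ l : S, l ≤ c → l ≤ a → l = ⊥) ∧
    (∀ u : S, u ≤ x → c ≤ u → a ≤ u → u = x)

/-- The rank of a matroid scheme: the common value of `ρ` on maximal elements
(equal to the maximum value of `ρ`). -/
noncomputable def schemeRank {S : Type*} [Fintype S] (ρ : S → ℕ) : ℕ :=
  sSup (Set.range ρ)

/-- The Tutte polynomial of a matroid scheme, as a two-variable integer function. -/
noncomputable def tutte {S : Type*} [PartialOrder S] [OrderBot S] [Fintype S]
    (ρ : S → ℕ) (x y : ℤ) : ℤ :=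
  ∑ w : S, (x - 1) ^ (schemeRank ρ - ρ w) * (y - 1) ^ (natRank w - ρ w)

/-- An element of a poset is an order-atom if it covers a global minimum. -/
def OrdAtom {P : Type*} [PartialOrder P] (a : P) : Prop :=
  ∃ b : P, (∀ z : P, b ≤ z) ∧ b ⋖ a

/-- A partial order is a geometric lattice: it is bounded below, every pair has a least
upper bound and greatest lower bound, it is atomistic, and it is (upper) semimodular. -/
def IsGeomLatOrder (P : Type*) [PartialOrder P] : Prop :=
  (∃ b : P, ∀ x : P, b ≤ x) ∧
  (∀ x y : P, ∃ u : P, IsLUB {x, y} u) ∧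
  (∀ x y : P, ∃ l : P, IsGLB {x, y} l) ∧
  (∀ x : P, IsLUB {a : P | OrdAtom a ∧ a ≤ x} x) ∧
  (∀ x y m j : P, IsGLB {x, y} m → IsLUB {x, y} j → m ⋖ x → y ⋖ j)

/-- A geometric poset: a finite bounded-below poset with rank function `rk`
satisfying (G1) and (G2). -/
def IsGeometricPoset (P : Type*) [PartialOrder P] [OrderBot P] [Fintype P]
    (rk : P → ℕ) : Prop :=
  rk ⊥ = 0 ∧
  (∀ ⦃x y : P⦄, x ≤ y → rk x ≤ rk y) ∧
  (∀ x y : P, x ⋖ y → rk y = rk x + 1) ∧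
  (∀ m : P, IsMax m → IsGeomLatOrder (Set.Iic m)) ∧
  (∀ (x : P) (A : Set P), (∀ a ∈ A, IsAtom a) →
    ∀ y ∈ mubSet A, rk x < rk y → rk y = Nat.card A →
      ∃ a ∈ A, ¬ a ≤ x ∧ ∃ w : P, x ≤ w ∧ a ≤ w)

theorem Finset.natCard_atoms_le_eq_card {α : Type*} [DecidableEq α] (s : Finset α) :
    Nat.card {t : Finset α // IsAtom t ∧ t ≤ s} = s.card := by
  rw [← Nat.card_eq_finsetCard]
  refine (Nat.card_congr (Equiv.ofBijective
    (fun a : s => (⟨{a.1}, Finset.isAtom_singleton _,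
      Finset.singleton_subset_iff.mpr a.2⟩ :
      {t : Finset α // IsAtom t ∧ t ≤ s})) ⟨?_, ?_⟩)).symm
  · intro a b hab
    exact Subtype.ext (Finset.singleton_injective (congrArg Subtype.val hab))
  · rintro ⟨t, ht, hts⟩
    obtain ⟨a, rfl⟩ := Finset.isAtom_iff.mp ht
    exact ⟨⟨a, by simpa using hts⟩, rfl⟩

section SimplicialPoset

variable {S : Type*} [PartialOrder S] [OrderBot S]

theorem natRank_bot : natRank (⊥ : S) = 0 := by
  rw [natRank, Nat.card_eq_zero]
  exact Or.inl ⟨fun a => a.2.1.1 (le_bot_iff.mp a.2.2)⟩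

theorem natRank_eq_card_of_orderIso {w : S} {α : Type*} [DecidableEq α]
    (E : Set.Iic w ≃o Finset α) (u : Set.Iic w) : natRank (u : S) = (E u).card := by
  let atomsIic : {a : S // IsAtom a ∧ a ≤ u} ≃ {a : Set.Iic w // IsAtom a ∧ a ≤ u} :=
    { toFun := fun a => ⟨⟨a, a.2.2.trans u.2⟩, a.2.1.Iic _, a.2.2⟩
      invFun := fun a => ⟨a.1, a.2.1.of_isAtom_coe_Iic, a.2.2⟩
      left_inv := fun _ => rfl
      right_inv := fun _ => rfl }
  rw [natRank, Nat.card_congr atomsIic,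
    Nat.card_congr (E.toEquiv.subtypeEquiv (q := fun t => IsAtom t ∧ t ≤ E u) fun a => by
      rw [OrderIso.coe_toEquiv, E.isAtom_iff, E.le_iff_le]),
    Finset.natCard_atoms_le_eq_card]

variable [Fintype S]

theorem IsSimplicialPoset.sum_neg_one_pow_natRank [DecidableEq S] [DecidableLE S]
    (hS : IsSimplicialPoset S) (w : S) :
    ∑ u with u ≤ w, (-1 : ℤ) ^ natRank u = if w = ⊥ then 1 else 0 := by
  classical
  obtain ⟨e⟩ := hS w
  let E := e.trans Fintype.finsetOrderIsoSet.symm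
  have hatoms : (Finset.univ : Finset {a : S // IsAtom a ∧ a ≤ w}) = ∅ ↔ w = ⊥ := by
    rw [Finset.univ_eq_empty_iff, isEmpty_subtype]
    refine ⟨fun h => (eq_bot_or_exists_atom_le w).resolve_right fun ⟨a, ha⟩ => h a ha, ?_⟩
    rintro rfl a ⟨ha, hab⟩
    exact ha.1 (le_bot_iff.mp hab)
  calc ∑ u with u ≤ w, (-1 : ℤ) ^ natRank u
      = ∑ u : Set.Iic w, (-1 : ℤ) ^ natRank (u : S) :=
        Finset.sum_subtype _ (by simp) _
    _ = ∑ s : Finset {a : S // IsAtom a ∧ a ≤ w}, (-1 : ℤ) ^ s.card :=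
        Fintype.sum_equiv E.toEquiv _ _ fun u => by rw [natRank_eq_card_of_orderIso E u]; rfl
    _ = if w = ⊥ then 1 else 0 := by
        rw [← Finset.powerset_univ, Finset.sum_powerset_neg_one_pow_card, if_congr hatoms rfl rfl]

end SimplicialPoset

theorem eq_of_forall_sum_filter_le_eq {P M : Type*} [PartialOrder P] [Fintype P] [DecidableLE P]
    [AddCommGroup M] {f g : P → M}
    (h : ∀ w, ∑ v with v ≤ w, f v = ∑ v with v ≤ w, g v) : f = g := by
  classical
  have split : ∀ (φ : P → M) w, ∑ v with v ≤ w, φ v = φ w + ∑ v with v < w, φ v := by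
    intro φ w
    rw [← Finset.add_sum_erase _ _ (by simp : w ∈ ({v | v ≤ w} : Finset P))]
    congr 2
    ext v
    simp [lt_iff_le_and_ne, and_comm]
  funext w
  induction w using WellFoundedLT.induction with
  | _ w ih =>
    have hw := h w
    rw [split f, split g, Finset.sum_congr rfl fun v hv => ih v (by simpa using hv)] at hw
    exact add_right_cancel hw

theorem IsMatroidScheme.rho_bot {S : Type*} [PartialOrder S] [OrderBot S] [Fintype S]
    {ρ : S → ℕ} (h : IsMatroidScheme ρ) : ρ ⊥ = 0 :=
  Nat.le_zero.mp (natRank_bot (S := S) ▸ h.M1 ⊥)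

namespace IsClosureFun

variable {S : Type*} [PartialOrder S] {ρ : S → ℕ} {cl : S → S}

theorem cl_cl (hcl : IsClosureFun ρ cl) (x : S) : cl (cl x) = cl x :=
  le_antisymm
    ((hcl x).2.2 _ ((hcl x).1.trans (hcl (cl x)).1) (by rw [(hcl (cl x)).2.1, (hcl x).2.1]))
    (hcl (cl x)).1

variable [OrderBot S] [Fintype S]

/-- By (M4), `cl u` and `w ≥ u` have a minimal upper bound `v`, and (M3) applied to a maximal
lower bound `l ≥ u` (which has the rank of `cl u`) forces `ρ v = ρ w`, so `cl u ≤ v ≤ cl w`. -/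
theorem monotone (h : IsMatroidScheme ρ) (hcl : IsClosureFun ρ cl) : Monotone cl := by
  intro u w huw
  obtain ⟨l, hul, hl⟩ :=
    Finite.exists_le_maximal (p := fun m => m ≤ cl u ∧ m ≤ w) (a := u) ⟨(hcl u).1, huw⟩
  have hl_mlb : l ∈ mlb (cl u) w :=
    ⟨hl.1.1, hl.1.2, fun m hm₁ hm₂ hlm => le_antisymm (hl.2 ⟨hm₁, hm₂⟩ hlm) hlm⟩
  have hρl : ρ (cl u) = ρ l := by
    have := h.M2 hul
    have := h.M2 hl.1.1
    have := (hcl u).2.1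
    omega
  obtain ⟨v, hv⟩ := h.M4 (cl u) w l hl_mlb hρl
  have hρv : ρ v = ρ w := by
    have := h.M3 (cl u) w v l hv hl_mlb
    have := h.M2 hv.2.1
    omega
  exact hv.1.trans ((hcl w).2.2 v hv.2.1 hρv)

theorem cl_le_iff_le (h : IsMatroidScheme ρ) (hcl : IsClosureFun ρ cl) {u w : S}
    (hw : cl w = w) : cl u ≤ w ↔ u ≤ w :=
  ⟨(hcl u).1.trans, fun huw => hw ▸ hcl.monotone h huw⟩

theorem cl_bot (h : IsMatroidScheme ρ) (hcl : IsClosureFun ρ cl)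
    (hnoloop : ∀ a : S, IsAtom a → ρ a ≠ 0) : cl ⊥ = ⊥ := by
  refine (eq_bot_or_exists_atom_le (cl ⊥)).resolve_right fun ⟨a, ha, hacl⟩ => hnoloop a ha ?_
  have := h.M2 hacl
  rw [(hcl ⊥).2.1, h.rho_bot] at this
  omega

theorem sum_fibers_le_eq_sum_le {M : Type*} [AddCommMonoid M] [DecidableEq S] [DecidableLE S]
    (h : IsMatroidScheme ρ) (hcl : IsClosureFun ρ cl) (w : {x : S // cl x = x}) (g : S → M) :
    ∑ v with v ≤ w, ∑ u with cl u = v.val, g u = ∑ u with u ≤ w.val, g u := by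
  let π : S → {x : S // cl x = x} := fun u => ⟨cl u, hcl.cl_cl u⟩
  have hfiber : ∀ v : {x : S // cl x = x},
      ∑ u with cl u = v.val, g u = ∑ u with π u = v, g u :=
    fun v => Finset.sum_congr (by ext; simp [π, Subtype.ext_iff]) fun _ _ => rfl
  simp only [hfiber]
  rw [Finset.sum_fiberwise_eq_sum_filter]
  exact Finset.sum_congr (by ext; simpa [π, ← Subtype.coe_le_coe] using hcl.cl_le_iff_le h w.2)
    fun _ _ => rfl

end IsClosureFun

open Classical in
/-- Lemma 11.1: in a loopless matroid scheme, the Möbius function of the poset of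
flats is given by `μ(w) = Σ_{u : cl u = w} (−1)^{|u|}`. -/
theorem statement18 {S : Type*} [PartialOrder S] [OrderBot S] [Fintype S]
    (ρ : S → ℕ) (h : IsMatroidScheme ρ) (cl : S → S) (hcl : IsClosureFun ρ cl)
    (hnoloop : ∀ a : S, IsAtom a → ρ a ≠ 0)
    (μ : {x : S // cl x = x} → ℤ) (b : {x : S // cl x = x})
    (hb : ∀ z : {x : S // cl x = x}, b ≤ z)
    (hμb : μ b = 1)
    (hμ : ∀ w : {x : S // cl x = x}, b < w →
      ∑ u : {x : S // cl x = x}, (if u ≤ w then μ u else 0) = 0) :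
    ∀ w : {x : S // cl x = x},
      μ w = ∑ u : S, (if cl u = w.val then (-1 : ℤ) ^ (natRank u) else 0) := by
  have hb_bot : b.val = ⊥ := le_bot_iff.mp (hb ⟨⊥, hcl.cl_bot h hnoloop⟩)
  have hμ_sum : ∀ w, ∑ v with v ≤ w, μ v = if w.val = ⊥ then 1 else 0 := by
    intro w
    rcases (hb w).eq_or_lt with rfl | hbw
    · rw [Finset.sum_eq_single_of_mem b (by simp) fun v hv hvb =>
        absurd (le_antisymm (Finset.mem_filter.mp hv).2 (hb v)) hvb, hμb, if_pos hb_bot]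
    · have hw : w.val ≠ ⊥ := fun hw => hbw.ne' (Subtype.ext (hw.trans hb_bot.symm))
      rw [Finset.sum_filter, hμ w hbw, if_neg hw]
  have hν_sum : ∀ w : {x : S // cl x = x},
      ∑ v with v ≤ w, ∑ u, (if cl u = v.val then (-1 : ℤ) ^ natRank u else 0) =
        if w.val = ⊥ then 1 else 0 := by
    intro w
    simp only [← Finset.sum_filter]
    rw [hcl.sum_fibers_le_eq_sum_le h, h.simplicial.sum_neg_one_pow_natRank]
  exact congrFun (eq_of_forall_sum_filter_le_eq fun w => (hμ_sum w).trans (hν_sum w).symm)
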